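/- arXiv:2307.03765 — 3 statements merged into one kernel-verified Lean document; each statement's English description precedes it below -/
import Mathlib

section
/- If θ/π is irrational, then for every interval [a,b] ⊆ [-1,1], lim_{N→∞} (1/N)·#{n ≤ N : cos(nθ) ∈ [a,b]} = (1/π) ∫_a^b dt/√(1−t²) = (arcsin(b) − arcsin(a))/π. -/
/-!
Since `θ / 2π` is irrational, `θ` has infinite order in the circle `ℝ ⧸ 2πℤ`, so the points `nθ`
are equidistributed there (Weyl): by Weyl's criterion it suffices that the averages of
`e^{iknθ}`, `k ≠ 0`, tend to `0`, and these are geometric sums of ratio `≠ 1`. The set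
`{x | cos x ∈ [a, b]}` has a Haar-null boundary, so by the portmanteau theorem the proportion of
`n ≤ N` with `cos nθ ∈ [a, b]` tends to its Haar measure. On `(-π, π]` that set is
`±[arccos b, arccos a]`, of measure `2 (arccos a - arccos b) / 2π = (arcsin b - arcsin a) / π`.
-/

open Real Set Filter
open MeasureTheory Topology
open scoped ENNReal Finset

theorem tendsto_inv_smul_sum_Icc_pow {𝕜 : Type*} [NormedField 𝕜] [NormedAlgebra ℝ 𝕜]
    {z : 𝕜} (hz : ‖z‖ ≤ 1) (hz₁ : z ≠ 1) :
    Tendsto (fun N : ℕ => (N : ℝ)⁻¹ • ∑ n ∈ Finset.Icc 1 N, z ^ n) atTop (𝓝 0) := by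
  refine (tendsto_inv_atTop_zero.comp tendsto_natCast_atTop_atTop).zero_smul_isBoundedUnder_le
    ⟨2 / ‖z - 1‖, eventually_map.2 <| Eventually.of_forall fun N => ?_⟩
  rw [Function.comp_apply, ← Finset.Ico_add_one_right_eq_Icc, geom_sum_Ico hz₁ (by omega),
    norm_div]
  gcongr
  calc ‖z ^ (N + 1) - z ^ 1‖ ≤ ‖z ^ (N + 1)‖ + ‖z ^ 1‖ := norm_sub_le _ _
    _ ≤ 1 + 1 := by gcongr <;> rw [norm_pow] <;> exact pow_le_one₀ (norm_nonneg z) hz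
    _ = 2 := by norm_num

section EmpiricalMeasure

variable {X : Type*} [MeasurableSpace X]

noncomputable def empiricalMeasure (u : ℕ → X) (N : ℕ) : Measure X :=
  (N : ℝ≥0∞)⁻¹ • ∑ n ∈ Finset.Icc 1 N, Measure.dirac (u n)

variable [MeasurableSingletonClass X] (u : ℕ → X) (N : ℕ)

theorem empiricalMeasure_apply (s : Set X) [DecidablePred (u · ∈ s)] :
    empiricalMeasure u N s = #{n ∈ Finset.Icc 1 N | u n ∈ s} / N := by
  simp [empiricalMeasure, Measure.finsetSum_apply, Measure.dirac_apply, Set.indicator_apply,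
    ENNReal.div_eq_inv_mul]

theorem empiricalMeasure_real_apply (s : Set X) [DecidablePred (u · ∈ s)] :
    (empiricalMeasure u N).real s = #{n ∈ Finset.Icc 1 N | u n ∈ s} / N := by
  simp [measureReal_def, empiricalMeasure_apply, ENNReal.toReal_div]

theorem isProbabilityMeasure_empiricalMeasure {N : ℕ} (hN : N ≠ 0) :
    IsProbabilityMeasure (empiricalMeasure u N) :=
  ⟨by classical simp [empiricalMeasure_apply, ENNReal.div_self, hN]⟩

theorem integral_empiricalMeasure {E : Type*} [NormedAddCommGroup E] [NormedSpace ℝ E]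
    [CompleteSpace E] (f : X → E) :
    ∫ x, f x ∂empiricalMeasure u N = (N : ℝ)⁻¹ • ∑ n ∈ Finset.Icc 1 N, f (u n) := by
  rw [empiricalMeasure, integral_smul_measure,
    integral_finsetSum_measure fun n _ => integrable_dirac enorm_lt_top]
  simp [integral_dirac]

/-- Shifted by one, since `empiricalMeasure u 0 = 0` is not a probability measure. -/
noncomputable def empiricalProbabilityMeasure (u : ℕ → X) (N : ℕ) : ProbabilityMeasure X :=
  ⟨empiricalMeasure u (N + 1), isProbabilityMeasure_empiricalMeasure u N.succ_ne_zero⟩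

@[simp]
theorem toMeasure_empiricalProbabilityMeasure :
    (empiricalProbabilityMeasure u N : Measure X) = empiricalMeasure u (N + 1) :=
  rfl

end EmpiricalMeasure

section ContinuousMap

variable {X E : Type*} [TopologicalSpace X] [CompactSpace X] [MeasurableSpace X]
  [OpensMeasurableSpace X] [NormedAddCommGroup E]

theorem ContinuousMap.integrable (f : C(X, E)) (μ : Measure X) [IsFiniteMeasure μ] :
    Integrable f μ :=
  f.continuous.integrable_of_hasCompactSupport (HasCompactSupport.of_compactSpace f)

theorem ContinuousMap.lipschitzWith_integral [NormedSpace ℝ E] (μ : Measure X)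
    [IsProbabilityMeasure μ] : LipschitzWith 1 fun f : C(X, E) => ∫ x, f x ∂μ := by
  refine LipschitzWith.of_dist_le_mul fun f g => ?_
  rw [dist_eq_norm, dist_eq_norm, ← integral_sub (f.integrable μ) (g.integrable μ)]
  simpa using norm_integral_le_of_norm_le_const (μ := μ)
    (Eventually.of_forall fun x => (f - g).norm_coe_le_norm x)

end ContinuousMap

namespace AddCircle

theorem fourier_nsmul {T : ℝ} (k : ℤ) (n : ℕ) (x : AddCircle T) :
    fourier k (n • x) = fourier k x ^ n := by
  rw [fourier_apply, fourier_apply, smul_comm, toCircle_nsmul, Circle.coe_pow]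

variable {T : ℝ} [hT : Fact (0 < T)]

theorem fourier_ne_one {k : ℤ} (hk : k ≠ 0) {x : AddCircle T} (hx : ¬IsOfFinAddOrder x) :
    fourier k x ≠ 1 := by
  rw [fourier_apply, ← Circle.coe_one, ne_eq, Circle.coe_inj, ← toCircle_zero (T := T)]
  exact fun h => hx (isOfFinAddOrder_iff_zsmul_eq_zero.2 ⟨k, hk, injective_toCircle hT.out.ne' h⟩)

theorem integral_fourier_haarAddCircle {k : ℤ} (hk : k ≠ 0) :
    ∫ x, fourier k x ∂(haarAddCircle : Measure (AddCircle T)) = 0 :=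
  integral_eq_zero_of_add_right_eq_neg (fourier_add_half_inv_index (T := T) hk hT.out)

noncomputable def haarProbabilityMeasure : ProbabilityMeasure (AddCircle T) :=
  ⟨haarAddCircle, inferInstance⟩

theorem tendsto_haarProbabilityMeasure_of_tendsto_integral_fourier {ι : Type*} {L : Filter ι}
    {μs : ι → ProbabilityMeasure (AddCircle T)}
    (h : ∀ k ≠ 0, Tendsto (fun i => ∫ x, fourier k x ∂(μs i : Measure (AddCircle T))) L (𝓝 0)) :
    Tendsto μs L (𝓝 haarProbabilityMeasure) := by
  -- The integrals against the `μs i` are uniformly Lipschitz, so the continuous functions along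
  -- which they converge form a closed subspace; it contains the Fourier monomials.
  let converging : Submodule ℂ C(AddCircle T, ℂ) :=
    { carrier := {f | Tendsto (fun i => ∫ x, f x ∂(μs i : Measure (AddCircle T))) L
        (𝓝 (∫ x, f x ∂haarAddCircle))}
      add_mem' := fun {f g} hf hg => by
        simpa [integral_add (f.integrable _) (g.integrable _)] using hf.add hg
      zero_mem' := by simp [tendsto_const_nhds]
      smul_mem' := fun c f hf => by simpa [integral_const_mul] using hf.const_mul c }
  have converging_closed : IsClosed (converging : Set C(AddCircle T, ℂ)) :=
    (LipschitzWith.uniformEquicontinuous _ 1 fun i =>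
      ContinuousMap.lipschitzWith_integral _).equicontinuous.isClosed_setOfPred_tendsto
      (ContinuousMap.lipschitzWith_integral _).continuous
  have span_le : Submodule.span ℂ (range fourier) ≤ converging := by
    rw [Submodule.span_le]
    rintro _ ⟨k, rfl⟩
    change Tendsto (fun i => ∫ x, fourier k x ∂(μs i : Measure (AddCircle T))) L
      (𝓝 (∫ x, fourier k x ∂haarAddCircle))
    rcases eq_or_ne k 0 with rfl | hk
    · simp [tendsto_const_nhds]
    · rw [integral_fourier_haarAddCircle hk]
      exact h k hk
  have converging_eq_top : converging = ⊤ := by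
    rw [eq_top_iff, ← span_fourier_closure_eq_top]
    exact Submodule.topologicalClosure_minimal _ span_le converging_closed
  rw [ProbabilityMeasure.tendsto_iff_forall_integral_rclike_tendsto ℂ]
  intro f
  exact (converging_eq_top ▸ Submodule.mem_top : f.toContinuousMap ∈ converging)

theorem tendsto_empiricalProbabilityMeasure_nsmul {x : AddCircle T} (hx : ¬IsOfFinAddOrder x) :
    Tendsto (empiricalProbabilityMeasure (· • x)) atTop (𝓝 haarProbabilityMeasure) := by
  refine tendsto_haarProbabilityMeasure_of_tendsto_integral_fourier fun k hk => ?_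
  simp only [toMeasure_empiricalProbabilityMeasure, integral_empiricalMeasure, fourier_nsmul]
  exact (tendsto_add_atTop_iff_nat 1).2 <|
    tendsto_inv_smul_sum_Icc_pow (by rw [fourier_apply, Circle.norm_coe]) (fourier_ne_one hk hx)

end AddCircle

theorem measure_inter_Ioc_neg_eq_two_mul {μ : Measure ℝ} [μ.IsNegInvariant] [NullSingletonClass μ]
    {A : Set ℝ} (hA : MeasurableSet A) (hA_neg : -A = A) {c : ℝ} (hc : 0 < c) :
    μ (A ∩ Ioc (-c) c) = 2 * μ (A ∩ Icc 0 c) := by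
  have h_left : μ (A ∩ Ioo (-c) 0) = μ (A ∩ Icc 0 c) := calc
    μ (A ∩ Ioo (-c) 0) = μ (-(A ∩ Ioo 0 c)) := by
      rw [Set.inter_neg, hA_neg, Set.neg_Ioo, neg_zero]
    _ = μ (A ∩ Ioo 0 c) := Measure.measure_neg _ _
    _ = μ (A ∩ Icc 0 c) := measure_congr (ae_eq_refl A |>.inter Ioo_ae_eq_Icc)
  rw [← Ioo_union_Icc_eq_Ioc (neg_lt_zero.2 hc) hc.le, Set.inter_union_distrib_left,
    measure_union ?_ (hA.inter measurableSet_Icc), h_left, two_mul]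
  exact disjoint_left.2 fun x ⟨_, _, hx⟩ ⟨_, hx', _⟩ => hx.not_ge hx'

namespace Real

theorem Icc_inter_cos_preimage_Icc {a b : ℝ} (ha : -1 ≤ a) (hab : a ≤ b) (hb : b ≤ 1) :
    Icc 0 π ∩ cos ⁻¹' Icc a b = Icc (arccos b) (arccos a) := by
  ext x
  constructor
  · rintro ⟨⟨hx₀, hxπ⟩, hxa, hxb⟩
    rw [← arccos_cos hx₀ hxπ]
    exact ⟨arccos_le_arccos hxb, arccos_le_arccos hxa⟩
  · rintro ⟨hbx, hxa⟩
    have hx₀ : 0 ≤ x := (arccos_nonneg b).trans hbx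
    have hxπ : x ≤ π := hxa.trans (arccos_le_pi a)
    refine ⟨⟨hx₀, hxπ⟩, ?_, ?_⟩
    · simpa [cos_arccos ha (hab.trans hb)] using
        antitoneOn_cos ⟨hx₀, hxπ⟩ ⟨hx₀.trans hxa, arccos_le_pi a⟩ hxa
    · simpa [cos_arccos (ha.trans hab) hb] using
        antitoneOn_cos ⟨arccos_nonneg b, hbx.trans hxπ⟩ ⟨hx₀, hxπ⟩ hbx

instance : Fact (0 < 2 * π) := ⟨two_pi_pos⟩

noncomputable def circleCos : AddCircle (2 * π) → ℝ := cos_periodic.lift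

@[simp]
theorem circleCos_coe (x : ℝ) : circleCos x = cos x := cos_periodic.lift_coe x

theorem circleCos_nsmul_coe (n : ℕ) (θ : ℝ) :
    circleCos (n • (θ : AddCircle (2 * π))) = cos (n * θ) := by
  rw [← AddCircle.coe_nsmul, circleCos_coe, nsmul_eq_mul]

theorem continuous_circleCos : Continuous circleCos :=
  continuous_coinduced_dom.2 continuous_cos

theorem volume_circleCos_preimage_Icc {a b : ℝ} (ha : -1 ≤ a) (hab : a ≤ b) (hb : b ≤ 1) :
    volume (circleCos ⁻¹' Icc a b) = 2 * ENNReal.ofReal (arcsin b - arcsin a) := calc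
  volume (circleCos ⁻¹' Icc a b) = volume (cos ⁻¹' Icc a b ∩ Ioc (-π) π) := by
    rw [← (AddCircle.measurePreserving_mk (2 * π) (-π)).measure_preimage
      (isClosed_Icc.preimage continuous_circleCos).nullMeasurableSet,
      Measure.restrict_apply' measurableSet_Ioc, show -π + 2 * π = π by ring]
    rfl
  _ = 2 * volume (cos ⁻¹' Icc a b ∩ Icc 0 π) :=
    measure_inter_Ioc_neg_eq_two_mul (measurableSet_Icc.preimage continuous_cos.measurable)
      (by ext; simp) pi_pos
  _ = 2 * ENNReal.ofReal (arcsin b - arcsin a) := by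
    rw [inter_comm, Icc_inter_cos_preimage_Icc ha hab hb, volume_Icc,
      arccos_eq_pi_div_two_sub_arcsin, arccos_eq_pi_div_two_sub_arcsin]
    ring_nf

theorem haarAddCircle_real_circleCos_preimage_Icc {a b : ℝ} (ha : -1 ≤ a) (hab : a ≤ b)
    (hb : b ≤ 1) :
    (AddCircle.haarAddCircle : Measure (AddCircle (2 * π))).real (circleCos ⁻¹' Icc a b) =
      (arcsin b - arcsin a) / π := by
  have h_vol := congrArg ENNReal.toReal (volume_circleCos_preimage_Icc ha hab hb)
  rw [AddCircle.volume_eq_smul_haarAddCircle, Measure.smul_apply, smul_eq_mul,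
    ENNReal.toReal_mul, ENNReal.toReal_mul, ← measureReal_def, ENNReal.toReal_ofReal two_pi_pos.le,
    ENNReal.toReal_ofReal (sub_nonneg.2 (arcsin_le_arcsin hab)), ENNReal.toReal_ofNat] at h_vol
  field_simp
  linarith

theorem haarAddCircle_circleCos_preimage_singleton {a : ℝ} (ha : -1 ≤ a) (ha' : a ≤ 1) :
    (AddCircle.haarAddCircle : Measure (AddCircle (2 * π))) (circleCos ⁻¹' {a}) = 0 := by
  rw [← Icc_self, ← measureReal_eq_zero_iff,
    haarAddCircle_real_circleCos_preimage_Icc ha le_rfl ha', sub_self, zero_div]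

theorem haarAddCircle_frontier_circleCos_preimage_Icc {a b : ℝ} (ha : -1 ≤ a) (hab : a ≤ b)
    (hb : b ≤ 1) :
    (AddCircle.haarAddCircle : Measure (AddCircle (2 * π)))
      (frontier (circleCos ⁻¹' Icc a b)) = 0 := by
  refine measure_mono_null (continuous_circleCos.frontier_preimage_subset _) ?_
  rw [frontier_Icc hab, insert_eq, preimage_union]
  exact measure_union_null (haarAddCircle_circleCos_preimage_singleton ha (hab.trans hb))
    (haarAddCircle_circleCos_preimage_singleton (ha.trans hab) hb)

end Real

theorem cos_n_theta_arcsine_distribution (θ : ℝ) (hθ : Irrational (θ / π)) :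
    ∀ a b : ℝ, -1 ≤ a → a ≤ b → b ≤ 1 →
      Tendsto (fun N : ℕ =>
          ((Finset.Icc 1 N).filter (fun n : ℕ => Real.cos (n * θ) ∈ Icc a b)).card / (N : ℝ))
        atTop (nhds ((Real.arcsin b - Real.arcsin a) / π)) := by
  intro a b ha hab hb
  have h_orbit : ¬IsOfFinAddOrder (θ : AddCircle (2 * π)) := by
    rw [AddCircle.isOfFinAddOrder_iff_exists_rat_eq_div, mul_comm, ← div_div]
    exact hθ.div_natCast two_ne_zero
  have h_lim := (ENNReal.tendsto_toReal (measure_ne_top _ _)).comp <|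
    ProbabilityMeasure.tendsto_measure_of_null_frontier_of_tendsto'
      (AddCircle.tendsto_empiricalProbabilityMeasure_nsmul h_orbit)
      (haarAddCircle_frontier_circleCos_preimage_Icc ha hab hb)
  rw [← tendsto_add_atTop_iff_nat 1]
  convert h_lim using 2 with N
  · classical
    rw [Function.comp_apply, toMeasure_empiricalProbabilityMeasure, ← measureReal_def,
      empiricalMeasure_real_apply]
    simp only [mem_preimage, circleCos_nsmul_coe, Nat.cast_add, Nat.cast_one]
  · exact (haarAddCircle_real_circleCos_preimage_Icc ha hab hb).symm
end

section
/- The Bessel function J₀(2π) = (1/π)∫_0^π cos(2π·cos t) dt is nonzero. -/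
/-!
By symmetry `∫₀^π cos (2π cos t) dt = 2 ∫₀^{π/2} cos (2π cos t) dt`; split the latter at
`t₀ = arccos (3/4)`. On `[0, t₀]` the integrand is nonnegative, and for `t ≤ 1/2` it is at least
`cos (π/4) = √2/2` because `2π (1 - cos t) ≤ π t² ≤ π/4`; this part is at least `√2/4`.
On `[t₀, π/2]` substitute `x = cos t` to get `∫₀^{3/4} cos (2πx) / √(1 - x²) dx`. Over each quarter
period `cos (2πx)` has integral `±1/(2π)`, and the weight `1/√(1 - x²)` is at least `1` on `[0, 1/4]`,
at most `6/5` on `[1/4, 1/2]` and at most `8/5` on `[1/2, 3/4]`, so this part is at least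
`(1 - 6/5 - 8/5)/(2π) ≥ -3/10`. As `√2/4 > 3/10`, the integral is positive.
-/

open Real intervalIntegral Set MeasureTheory

theorem integral_zero_pi_comp_cos_of_even {g : ℝ → ℝ} (hg : Continuous g) (heven : Function.Even g) :
    ∫ t in (0:ℝ)..π, g (cos t) = 2 * ∫ t in (0:ℝ)..π / 2, g (cos t) := by
  have hint : ∀ a b : ℝ, IntervalIntegrable (fun t => g (cos t)) volume a b :=
    fun _ _ => (hg.comp continuous_cos).intervalIntegrable _ _
  have hreflect : ∫ t in π / 2..π, g (cos t) = ∫ t in (0:ℝ)..π / 2, g (cos t) := by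
    have h := integral_comp_sub_left (fun t => g (cos t)) π (a := 0) (b := π / 2)
    rw [show π - π / 2 = π / 2 by ring, sub_zero] at h
    simp only [cos_pi_sub, show ∀ x, g (-x) = g x from heven] at h
    exact h.symm
  rw [← integral_add_adjacent_intervals (hint 0 (π / 2)) (hint (π / 2) π), hreflect]
  ring

theorem continuousOn_div_sqrt_one_sub_sq {g : ℝ → ℝ} (hg : Continuous g) :
    ContinuousOn (fun x => g x / √(1 - x ^ 2)) {x | x ^ 2 < 1} :=
  hg.continuousOn.div (by fun_prop) fun x (hx : x ^ 2 < 1) => (sqrt_pos.2 (by linarith)).ne'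

theorem integral_comp_cos_eq_integral_div_sqrt {g : ℝ → ℝ} (hg : Continuous g) {a b : ℝ}
    (ha : 0 < a) (hab : a ≤ b) (hb : b < π) :
    ∫ t in a..b, g (cos t) = ∫ x in cos b..cos a, g x / √(1 - x ^ 2) := by
  have hsin_pos : ∀ t ∈ uIcc a b, 0 < sin t := fun t ht => by
    rw [uIcc_of_le hab] at ht
    exact sin_pos_of_pos_of_lt_pi (ha.trans_le ht.1) (ht.2.trans_lt hb)
  have hcos_image : cos '' uIcc a b ⊆ {x | x ^ 2 < 1} := by
    rintro _ ⟨t, ht, rfl⟩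
    show cos t ^ 2 < 1
    nlinarith [hsin_pos t ht, sin_sq_add_cos_sq t]
  have key := integral_comp_mul_deriv' (fun t _ => hasDerivAt_cos t)
    continuous_sin.neg.continuousOn ((continuousOn_div_sqrt_one_sub_sq hg).mono hcos_image)
  rw [integral_symm (cos a), ← key, ← intervalIntegral.integral_neg]
  refine integral_congr fun t ht => ?_
  have hsqrt : √(1 - cos t ^ 2) = sin t := by
    rw [uIcc_of_le hab] at ht
    exact (sin_eq_sqrt_one_sub_cos_sq (ha.le.trans ht.1) (ht.2.trans hb.le)).symm
  have := (hsin_pos t ht).ne'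
  simp only [Function.comp, hsqrt]
  field_simp

theorem le_div_sqrt_one_sub_sq {x y : ℝ} (hy : 0 ≤ y) (hx : x ^ 2 < 1) :
    y ≤ y / √(1 - x ^ 2) :=
  le_div_self hy (sqrt_pos.2 (by linarith)) (sqrt_le_one.2 (by nlinarith))

theorem div_le_div_sqrt_one_sub_sq {x y m : ℝ} (hy : y ≤ 0) (hm : 0 < m)
    (h : m ^ 2 ≤ 1 - x ^ 2) : y / m ≤ y / √(1 - x ^ 2) := by
  have hms : m ≤ √(1 - x ^ 2) := (le_sqrt hm.le (by nlinarith)).2 h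
  rw [div_le_div_iff₀ hm (hm.trans_le hms)]
  nlinarith

theorem integral_cos_two_pi_mul (p q : ℝ) :
    ∫ x in p..q, cos (2 * π * x) = (sin (2 * π * q) - sin (2 * π * p)) / (2 * π) := by
  rw [integral_comp_mul_left cos (by positivity : 2 * π ≠ 0), integral_cos, smul_eq_mul]
  field_simp

theorem cos_two_pi_mul_nonneg {x : ℝ} (h₁ : 3 / 4 ≤ x) (h₂ : x ≤ 5 / 4) : 0 ≤ cos (2 * π * x) := by
  rw [← cos_sub_two_pi]
  exact cos_nonneg_of_mem_Icc ⟨by nlinarith [pi_pos], by nlinarith [pi_pos]⟩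

theorem intervalIntegrable_div_sqrt_one_sub_sq {g : ℝ → ℝ} (hg : Continuous g) {p q : ℝ}
    (hp : -1 < p) (hpq : p ≤ q) (hq : q < 1) :
    IntervalIntegrable (fun x => g x / √(1 - x ^ 2)) volume p q :=
  ((continuousOn_div_sqrt_one_sub_sq hg).mono fun x hx =>
    show x ^ 2 < 1 by nlinarith [hx.1, hx.2]).intervalIntegrable_of_Icc hpq

theorem integral_cos_two_pi_mul_div_le_integral_div_sqrt {p q m : ℝ} (hp : 1 / 4 ≤ p)
    (hpq : p ≤ q) (hq : q ≤ 3 / 4) (hm : 0 < m) (hmq : m ^ 2 ≤ 1 - q ^ 2) :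
    (∫ x in p..q, cos (2 * π * x)) / m ≤ ∫ x in p..q, cos (2 * π * x) / √(1 - x ^ 2) := by
  rw [← intervalIntegral.integral_div]
  refine integral_mono_on hpq (Continuous.intervalIntegrable (by fun_prop) _ _)
    (intervalIntegrable_div_sqrt_one_sub_sq (by fun_prop) (by linarith) hpq (by linarith))
    fun x hx => div_le_div_sqrt_one_sub_sq ?_ hm (by nlinarith [hx.1, hx.2])
  exact cos_nonpos_of_pi_div_two_le_of_le (by nlinarith [hx.1, pi_pos]) (by nlinarith [hx.2, pi_pos])

theorem neg_three_tenths_le_integral_cos_two_pi_mul_div_sqrt :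
    -(3 / 10) ≤ ∫ x in (0:ℝ)..3 / 4, cos (2 * π * x) / √(1 - x ^ 2) := by
  have hint : ∀ p q : ℝ, 0 ≤ p → p ≤ q → q < 1 →
      IntervalIntegrable (fun x => cos (2 * π * x) / √(1 - x ^ 2)) volume p q :=
    fun p q hp hpq hq => intervalIntegrable_div_sqrt_one_sub_sq (by fun_prop) (by linarith) hpq hq
  have hsin₁ : sin (2 * π * (1 / 4)) = 1 := by rw [show 2 * π * (1 / 4) = π / 2 by ring, sin_pi_div_two]
  have hsin₂ : sin (2 * π * (1 / 2)) = 0 := by rw [show 2 * π * (1 / 2) = π by ring, sin_pi]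
  have hsin₃ : sin (2 * π * (3 / 4)) = -1 := by
    rw [show 2 * π * (3 / 4) = π / 2 + π by ring, sin_add_pi, sin_pi_div_two]
  have h₁ : 1 / (2 * π) ≤ ∫ x in (0:ℝ)..1 / 4, cos (2 * π * x) / √(1 - x ^ 2) := by
    calc 1 / (2 * π) = ∫ x in (0:ℝ)..1 / 4, cos (2 * π * x) := by
          rw [integral_cos_two_pi_mul, hsin₁]; simp
      _ ≤ _ := integral_mono_on (by norm_num) (Continuous.intervalIntegrable (by fun_prop) _ _)
          (hint _ _ le_rfl (by norm_num) (by norm_num))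
          fun x hx => le_div_sqrt_one_sub_sq
            (cos_nonneg_of_mem_Icc ⟨by nlinarith [hx.1, pi_pos], by nlinarith [hx.2, pi_pos]⟩)
            (by nlinarith [hx.1, hx.2])
  have h₂ := integral_cos_two_pi_mul_div_le_integral_div_sqrt (p := 1 / 4) (q := 1 / 2)
    (m := 5 / 6) le_rfl (by norm_num) (by norm_num) (by norm_num) (by norm_num)
  have h₃ := integral_cos_two_pi_mul_div_le_integral_div_sqrt (p := 1 / 2) (q := 3 / 4)
    (m := 5 / 8) (by norm_num) (by norm_num) le_rfl (by norm_num) (by norm_num)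
  rw [integral_cos_two_pi_mul, hsin₁, hsin₂] at h₂
  rw [integral_cos_two_pi_mul, hsin₂, hsin₃] at h₃
  rw [← integral_add_adjacent_intervals (hint 0 (1 / 2) le_rfl (by norm_num) (by norm_num))
    (hint (1 / 2) (3 / 4) (by norm_num) (by norm_num) (by norm_num)),
    ← integral_add_adjacent_intervals (hint 0 (1 / 4) le_rfl (by norm_num) (by norm_num))
    (hint (1 / 4) (1 / 2) (by norm_num) (by norm_num) (by norm_num))]
  have hsum : 1 / (2 * π) + (0 - 1) / (2 * π) / (5 / 6) + (-1 - 0) / (2 * π) / (5 / 8)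
      = -(9 / 10 / π) := by
    field_simp; ring
  have hbound : 9 / 10 / π ≤ 3 / 10 := by
    rw [div_le_iff₀ pi_pos]; linarith [pi_gt_three]
  linarith

theorem sqrt_two_div_two_le_cos_two_pi_mul_cos {t : ℝ} (ht : |t| ≤ 1 / 2) :
    √2 / 2 ≤ cos (2 * π * cos t) := by
  have ht2 : t ^ 2 ≤ 1 / 4 := by nlinarith [sq_abs t, abs_nonneg t]
  have h₁ : 1 - t ^ 2 / 2 ≤ cos t := one_sub_sq_div_two_le_cos
  have h₂ : cos t ≤ 1 := cos_le_one t
  rw [← cos_pi_div_four, show 2 * π * cos t = 2 * π - 2 * π * (1 - cos t) by ring, cos_two_pi_sub]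
  exact cos_le_cos_of_nonneg_of_le_pi (by nlinarith [pi_pos]) (by linarith [pi_pos])
    (by nlinarith [pi_pos])

theorem sqrt_two_div_four_le_integral_cos_two_pi_mul_cos :
    √2 / 4 ≤ ∫ t in (0:ℝ)..arccos (3 / 4), cos (2 * π * cos t) := by
  have hint : ∀ p q : ℝ, IntervalIntegrable (fun t => cos (2 * π * cos t)) volume p q :=
    fun p q => (by fun_prop : Continuous fun t => cos (2 * π * cos t)).intervalIntegrable p q
  have hhalf : 1 / 2 ≤ arccos (3 / 4) :=
    calc 1 / 2 = arccos (cos (1 / 2)) := (arccos_cos (by norm_num) (by linarith [pi_gt_three])).symm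
      _ ≤ arccos (3 / 4) := arccos_le_arccos (by nlinarith [one_sub_sq_div_two_le_cos (x := 1 / 2)])
  have h₁ : √2 / 4 ≤ ∫ t in (0:ℝ)..1 / 2, cos (2 * π * cos t) :=
    calc √2 / 4 = ∫ _ in (0:ℝ)..1 / 2, √2 / 2 := by
          rw [intervalIntegral.integral_const, smul_eq_mul]; ring
      _ ≤ _ := integral_mono_on (by norm_num) intervalIntegrable_const (hint _ _)
          fun t ht => sqrt_two_div_two_le_cos_two_pi_mul_cos (abs_le.2 ⟨by linarith [ht.1], ht.2⟩)
  have h₂ : 0 ≤ ∫ t in (1 / 2 : ℝ)..arccos (3 / 4), cos (2 * π * cos t) := by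
    refine integral_nonneg hhalf fun t ht => cos_two_pi_mul_nonneg ?_ (by linarith [cos_le_one t])
    calc 3 / 4 = cos (arccos (3 / 4)) := (cos_arccos (by norm_num) (by norm_num)).symm
      _ ≤ cos t := cos_le_cos_of_nonneg_of_le_pi (by linarith [ht.1]) (arccos_le_pi _) ht.2
  rw [← integral_add_adjacent_intervals (hint 0 (1 / 2)) (hint (1 / 2) (arccos (3 / 4)))]
  linarith

theorem besselJzero_two_pi_ne_zero :
    (1 / π) * (∫ t in (0:ℝ)..π, Real.cos (2 * π * Real.cos t)) ≠ 0 := by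
  have hg : Continuous fun x => cos (2 * π * x) := by fun_prop
  have hsplit : ∫ t in (0:ℝ)..π / 2, cos (2 * π * cos t)
      = (∫ t in (0:ℝ)..arccos (3 / 4), cos (2 * π * cos t))
        + ∫ t in arccos (3 / 4)..π / 2, cos (2 * π * cos t) :=
    (integral_add_adjacent_intervals ((hg.comp continuous_cos).intervalIntegrable _ _)
      ((hg.comp continuous_cos).intervalIntegrable _ _)).symm
  have htail : ∫ t in arccos (3 / 4)..π / 2, cos (2 * π * cos t)
      = ∫ x in (0:ℝ)..3 / 4, cos (2 * π * x) / √(1 - x ^ 2) := by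
    rw [integral_comp_cos_eq_integral_div_sqrt hg (arccos_pos.2 (by norm_num))
      (arccos_lt_pi_div_two.2 (by norm_num)).le (by linarith [pi_pos]), cos_pi_div_two,
      cos_arccos (by norm_num) (by norm_num)]
  have hsqrt_two : 6 / 5 < √2 := (lt_sqrt (by norm_num)).2 (by norm_num)
  have hpos : 0 < ∫ t in (0:ℝ)..π, cos (2 * π * cos t) := by
    rw [integral_zero_pi_comp_cos_of_even hg fun x => by simp only [mul_neg, cos_neg], hsplit, htail]
    linarith [sqrt_two_div_four_le_integral_cos_two_pi_mul_cos,
      neg_three_tenths_le_integral_cos_two_pi_mul_div_sqrt]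
  exact (mul_pos (by positivity) hpos).ne'
end

section
/- Let p be prime and a an integer with a² < 4p, a ≠ 0, and suppose a² ≠ p, 2p, 3p. Write the roots of T² − aT + p as √p·e^{±iθ}. Then θ/π is irrational. -/
open Real Set

theorem frobenius_angle_irrational (p : ℕ) (hp : p.Prime) (a : ℤ) (ha0 : a ≠ 0)
    (ha : (a : ℝ) ^ 2 < 4 * p)
    (h1 : (a : ℤ) ^ 2 ≠ p) (h2 : (a : ℤ) ^ 2 ≠ 2 * p) (h3 : (a : ℤ) ^ 2 ≠ 3 * p)
    (θ : ℝ) (hθ : θ ∈ Ioo (0 : ℝ) π)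
    (hroot : (Real.sqrt p * Complex.exp (θ * Complex.I)) ^ 2
        - a * (Real.sqrt p * Complex.exp (θ * Complex.I)) + p = 0) :
    Irrational (θ / π) := by
  by_contra h
  rw [Irrational] at h
  push_neg at h
  obtain ⟨q, hq⟩ := h
  rw [eq_div_iff Real.pi_ne_zero] at hq
  -- hq : (q : ℝ) * π = θ
  have hp0 : 0 < (p : ℝ) := by exact_mod_cast hp.pos
  set s : ℂ := (Real.sqrt p : ℂ) with hs_def
  have hsq : s ^ 2 = (p : ℂ) := by
    rw [hs_def]; norm_cast
    exact Real.sq_sqrt hp0.le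
  have hpC : (p : ℂ) ≠ 0 := by exact_mod_cast hp0.ne'
  have hs0 : s ≠ 0 := by
    intro hs
    rw [hs] at hsq
    exact hpC (by simpa using hsq.symm)
  set ζ : ℂ := Complex.exp (θ * Complex.I) with hζ_def
  have hζ0 : ζ ≠ 0 := Complex.exp_ne_zero _
  have hzinv : ζ * ζ⁻¹ = 1 := mul_inv_cancel₀ hζ0
  have hkey0 : s * ζ * (s * (ζ + ζ⁻¹) - (a : ℂ)) = 0 := by
    linear_combination hroot + s ^ 2 * hzinv + hsq
  have hkey : s * (ζ + ζ⁻¹) = (a : ℂ) := by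
    rcases mul_eq_zero.mp hkey0 with h' | h'
    · rcases mul_eq_zero.mp h' with h'' | h''
      · exact absurd h'' hs0
      · exact absurd h'' hζ0
    · exact sub_eq_zero.mp h'
  -- ζ is a root of unity
  set n : ℕ := 2 * q.den with hn_def
  have hn0 : n ≠ 0 := by simp [hn_def, q.den_nz]
  have hζn : ζ ^ n = 1 := by
    rw [hζ_def, ← Complex.exp_nat_mul]
    have hden : (q : ℝ) * (q.den : ℝ) = (q.num : ℝ) := by
      rw [Rat.cast_def]
      field_simp
    have hreal : (n : ℝ) * θ = (q.num : ℝ) * (2 * π) := by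
      rw [← hq, hn_def]
      push_cast
      linear_combination 2 * π * hden
    calc Complex.exp ((n : ℂ) * (θ * Complex.I))
        = Complex.exp ((q.num : ℂ) * (2 * π * Complex.I)) := by
          congr 1
          have hC := congrArg Complex.ofReal hreal
          push_cast at hC ⊢
          linear_combination Complex.I * hC
      _ = 1 := Complex.exp_int_mul_two_pi_mul_I q.num
  have hζint : IsIntegral ℤ ζ := by
    refine ⟨Polynomial.X ^ n - 1, ?_, ?_⟩
    · simpa using Polynomial.monic_X_pow_sub_C (1 : ℤ) hn0
    · simp [hζn]
  have hinv_eq : ζ⁻¹ = ζ ^ (n - 1) := by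
    have : ζ ^ (n - 1) * ζ = 1 := by
      rw [← pow_succ, Nat.sub_add_cancel (Nat.one_le_iff_ne_zero.mpr hn0), hζn]
    field_simp
    linear_combination -this
  have hαint : IsIntegral ℤ (ζ + ζ⁻¹) := by
    rw [hinv_eq]
    exact hζint.add (hζint.pow _)
  -- (ζ + ζ⁻¹)^2 = a^2 / p, a rational number
  set r : ℚ := (a : ℚ) ^ 2 / (p : ℚ) with hr_def
  have hα2 : (ζ + ζ⁻¹) ^ 2 = algebraMap ℚ ℂ r := by
    have : (s * (ζ + ζ⁻¹)) ^ 2 = (a : ℂ) ^ 2 := by rw [hkey]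
    have h2' : (p : ℂ) * (ζ + ζ⁻¹) ^ 2 = (a : ℂ) ^ 2 := by
      rw [← hsq]; linear_combination this
    have hmap : algebraMap ℚ ℂ r = (a : ℂ) ^ 2 / (p : ℂ) := by
      rw [eq_ratCast (algebraMap ℚ ℂ), hr_def]
      push_cast
      ring
    rw [hmap, eq_div_iff hpC]
    linear_combination h2'
  have hrint : IsIntegral ℤ r := by
    rw [← isIntegral_algebraMap_iff (algebraMap ℚ ℂ).injective]
    rw [← hα2]
    exact hαint.pow 2
  obtain ⟨z, hz⟩ := IsIntegrallyClosed.isIntegral_iff.mp hrint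
  -- a^2 = z * p in ℤ
  have hpQ : (p : ℚ) ≠ 0 := by exact_mod_cast hp.pos.ne'
  have haz : a ^ 2 = z * (p : ℤ) := by
    have : (z : ℚ) = (a : ℚ) ^ 2 / (p : ℚ) := by rw [← hr_def, ← hz]; simp
    rw [eq_div_iff hpQ] at this
    exact_mod_cast this.symm
  have haZ : a ^ 2 < 4 * (p : ℤ) := by exact_mod_cast ha
  have ha2pos : 0 < a ^ 2 := by positivity
  have hppos : (0 : ℤ) < (p : ℤ) := by exact_mod_cast hp.pos
  have hz_lt : z < 4 := by nlinarith
  have hz_pos : 0 < z := by nlinarith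
  interval_cases z
  · exact h1 (by linarith)
  · exact h2 (by linarith)
  · exact h3 (by linarith)
end
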